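/- For every positive integer L, the identity Σ_{n≥1} (q^n/(1+q^n)) · C(L+n−1, n−1)_q = Σ_{s≥1} (−1)^{s+1} q^s/(q^s;q)_{L+1} holds as formal power series in q. -/

import Mathlib

open PowerSeries

/-- `(q^s; q)_n` as a formal power series in `q = X` over `ℚ`. -/
noncomputable def qp (s n : ℕ) : PowerSeries ℚ :=
  ∏ i ∈ Finset.range n, (1 - (X : PowerSeries ℚ) ^ (s + i))

/-- `(-q; q)_n` as a formal power series in `q = X` over `ℚ`. -/
noncomputable def np (n : ℕ) : PowerSeries ℚ :=
  ∏ i ∈ Finset.range n, (1 + (X : PowerSeries ℚ) ^ (i + 1))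

/-- The Gaussian binomial coefficient `C(m, k)_q = (q;q)_m / ((q;q)_k (q;q)_{m-k})`. -/
noncomputable def gb (m k : ℕ) : PowerSeries ℚ := qp 1 m * (qp 1 k)⁻¹ * (qp 1 (m - k))⁻¹

/-! Both sides are the double sum `Σ_{s,n ≥ 1} (-1)^{s+1} q^{sn} C(L+n-1, n-1)_q`: expand
`q^n/(1+q^n) = Σ_{s ≥ 1} (-1)^{s+1} q^{sn}` on the left, and on the right use the q-binomial
theorem `1/(q^s;q)_{L+1} = Σ_{n ≥ 0} q^{sn} C(L+n, n)_q`. Only coefficients of `q^N` are compared,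
so each expansion is needed modulo a power of `q` beyond `N`; the q-binomial theorem is proved in
the truncated form `x^N ∣ ∏_{i ≤ L} (1 - q^i x) · Σ_{n < N} x^n C(L+n, n)_q - 1`, by induction on
`L` via q-Pascal. -/

open Finset

theorem Finset.sum_Icc_one_eq_sum_range {M : Type*} [AddCommMonoid M] (f : ℕ → M) (N : ℕ) :
    ∑ i ∈ Icc 1 N, f i = ∑ i ∈ range N, f (i + 1) := by
  rw [range_eq_Ico, sum_Ico_add' f, ← Ico_add_one_right_eq_Icc]

namespace PowerSeries

theorem coeff_eq_of_X_pow_dvd_sub {R : Type*} [CommRing R] {a b : R⟦X⟧} {m N : ℕ}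
    (h : X ^ m ∣ a - b) (hN : N < m) : coeff N a = coeff N b := by
  rw [← sub_eq_zero, ← map_sub]
  exact X_pow_dvd_iff.mp h N hN

theorem coeff_neg_one_pow_mul {R : Type*} [CommRing R] (k N : ℕ) (f : R⟦X⟧) :
    coeff N ((-1) ^ k * f) = (-1) ^ k * coeff N f := by
  rw [show (-1 : R⟦X⟧) ^ k = C ((-1) ^ k) by simp, coeff_C_mul]

theorem dvd_inv_sub_of_dvd_mul_sub_one {k : Type*} [Field k] {a f g : k⟦X⟧}
    (hf : constantCoeff f ≠ 0) (h : a ∣ f * g - 1) : a ∣ f⁻¹ - g := by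
  have hinv : f⁻¹ - g = -f⁻¹ * (f * g - 1) := by
    linear_combination g * PowerSeries.inv_mul_cancel f hf
  exact hinv ▸ h.mul_left _

end PowerSeries

theorem qp_zero (s : ℕ) : qp s 0 = 1 := prod_range_zero _

theorem qp_succ (s n : ℕ) : qp s (n + 1) = qp s n * (1 - X ^ (s + n)) := prod_range_succ _ _

theorem qp_eq_prod (s n : ℕ) : qp s n = ∏ i ∈ range n, (1 - X ^ i * X ^ s) := by
  simp only [qp, ← pow_add, add_comm]

theorem constantCoeff_qp {s : ℕ} (hs : 1 ≤ s) (n : ℕ) : constantCoeff (qp s n) = 1 := by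
  rw [qp, map_prod]
  exact prod_eq_one fun i _ ↦ by simp [zero_pow (show s + i ≠ 0 by omega)]

theorem qp_ne_zero {s : ℕ} (hs : 1 ≤ s) (n : ℕ) : qp s n ≠ 0 := fun h ↦ by
  simpa [h] using constantCoeff_qp hs n

theorem qp_mul_inv {s : ℕ} (hs : 1 ≤ s) (n : ℕ) : qp s n * (qp s n)⁻¹ = 1 :=
  PowerSeries.mul_inv_cancel _ (by simp [constantCoeff_qp hs])

theorem gb_mul_qp_mul_qp (m k : ℕ) : gb m k * (qp 1 k * qp 1 (m - k)) = qp 1 m := by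
  unfold gb
  linear_combination (qp 1 m * (qp 1 (m - k))⁻¹ * qp 1 (m - k)) * qp_mul_inv le_rfl k
    + qp 1 m * qp_mul_inv le_rfl (m - k)

theorem gb_zero_right (m : ℕ) : gb m 0 = 1 := by
  simp [gb, qp_zero, qp_mul_inv le_rfl]

theorem gb_self (n : ℕ) : gb n n = 1 := by
  simp [gb, qp_zero, qp_mul_inv le_rfl]

theorem gb_pascal (a b : ℕ) :
    gb (a + b + 2) (a + 1) = gb (a + b + 1) (a + 1) + X ^ (b + 1) * gb (a + b + 1) a := by
  have h₁ := gb_mul_qp_mul_qp (a + b + 2) (a + 1)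
  have h₂ := gb_mul_qp_mul_qp (a + b + 1) (a + 1)
  have h₃ := gb_mul_qp_mul_qp (a + b + 1) a
  rw [show a + b + 2 - (a + 1) = b + 1 by omega] at h₁
  rw [show a + b + 1 - (a + 1) = b by omega] at h₂
  rw [show a + b + 1 - a = b + 1 by omega] at h₃
  have eA := qp_succ 1 a
  have eB := qp_succ 1 b
  have eP := qp_succ 1 (a + b + 1)
  refine mul_right_cancel₀ (mul_ne_zero (qp_ne_zero le_rfl (a + 1)) (qp_ne_zero le_rfl (b + 1))) ?_
  linear_combination h₁ + eP - gb (a + b + 1) (a + 1) * qp 1 (a + 1) * eB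
    - (1 - X ^ (b + 1)) * h₂ - X ^ (b + 1) * gb (a + b + 1) a * qp 1 (b + 1) * eA
    - X ^ (b + 1) * (1 - X ^ (a + 1)) * h₃

noncomputable def qBinomSum (L N : ℕ) (x : ℚ⟦X⟧) : ℚ⟦X⟧ :=
  ∑ n ∈ range N, x ^ n * gb (L + n) n

theorem one_sub_mul_qBinomSum_succ (L N : ℕ) (x : ℚ⟦X⟧) :
    (1 - X ^ (L + 1) * x) * qBinomSum (L + 1) (N + 1) x
      = qBinomSum L (N + 1) x - X ^ (L + 1) * x ^ (N + 1) * gb (L + N + 1) N := by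
  induction N with
  | zero => simp [qBinomSum, gb_zero_right]
  | succ N ih =>
    have hT (K : ℕ) : qBinomSum K (N + 2) x
        = qBinomSum K (N + 1) x + x ^ (N + 1) * gb (K + (N + 1)) (N + 1) := sum_range_succ _ _
    rw [hT, hT, show L + 1 + (N + 1) = N + L + 2 by omega,
      show L + (N + 1) + 1 = N + L + 2 by omega, show L + (N + 1) = N + L + 1 by omega, gb_pascal]
    rw [show L + N + 1 = N + L + 1 by omega] at ih
    linear_combination ih

theorem pow_dvd_prod_mul_qBinomSum_sub_one (L N : ℕ) (x : ℚ⟦X⟧) :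
    x ^ N ∣ (∏ i ∈ range (L + 1), (1 - X ^ i * x)) * qBinomSum L N x - 1 := by
  cases N with
  | zero => simp
  | succ N =>
    induction L with
    | zero =>
      have hgeom := mul_neg_geom_sum x (N + 1)
      refine ⟨-1, ?_⟩
      simp only [qBinomSum, zero_add, gb_self, mul_one, prod_range_one, pow_zero, one_mul]
      linear_combination hgeom
    | succ L ih =>
      rw [prod_range_succ, mul_assoc, one_sub_mul_qBinomSum_succ]
      convert dvd_sub ih (dvd_mul_right (x ^ (N + 1))
        ((∏ i ∈ range (L + 1), (1 - X ^ i * x)) * X ^ (L + 1) * gb (L + N + 1) N)) using 1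
      ring

theorem X_pow_dvd_qp_inv_sub_qBinomSum {s : ℕ} (hs : 1 ≤ s) (L N : ℕ) :
    X ^ (s * N) ∣ (qp s (L + 1))⁻¹ - qBinomSum L N (X ^ s) := by
  refine PowerSeries.dvd_inv_sub_of_dvd_mul_sub_one (by simp [constantCoeff_qp hs]) ?_
  rw [qp_eq_prod, pow_mul]
  exact pow_dvd_prod_mul_qBinomSum_sub_one L N (X ^ s)

theorem coeff_X_pow_mul_qp_inv {s : ℕ} (hs : 1 ≤ s) (L N : ℕ) :
    coeff N (X ^ s * (qp s (L + 1))⁻¹)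
      = ∑ n ∈ Icc 1 N, coeff N (X ^ (s * n) * gb (L + n - 1) (n - 1)) := by
  calc coeff N (X ^ s * (qp s (L + 1))⁻¹) = coeff N (X ^ s * qBinomSum L N (X ^ s)) := by
        refine PowerSeries.coeff_eq_of_X_pow_dvd_sub (m := s + s * N) ?_ (by nlinarith)
        rw [pow_add, ← mul_sub]
        exact mul_dvd_mul_left _ (X_pow_dvd_qp_inv_sub_qBinomSum hs L N)
    _ = _ := by
        rw [qBinomSum, mul_sum, map_sum, sum_Icc_one_eq_sum_range]
        refine sum_congr rfl fun n _ ↦ ?_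
        rw [← mul_assoc, ← pow_mul, ← pow_add, Nat.add_sub_cancel, ← add_assoc,
          Nat.add_sub_cancel, mul_add_one, add_comm (s * n)]

theorem X_pow_dvd_inv_one_add_X_pow_sub {n : ℕ} (hn : 1 ≤ n) (N : ℕ) :
    X ^ (n * N) ∣ (1 + X ^ n : ℚ⟦X⟧)⁻¹ - ∑ i ∈ range N, (-X ^ n) ^ i := by
  refine PowerSeries.dvd_inv_sub_of_dvd_mul_sub_one
    (by simp [zero_pow (show n ≠ 0 by omega)]) ⟨-(-1) ^ N, ?_⟩
  rw [show (1 + X ^ n : ℚ⟦X⟧) = 1 - -X ^ n by ring, mul_neg_geom_sum, neg_pow, pow_mul]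
  ring

theorem coeff_X_pow_mul_inv_one_add_X_pow_mul {n : ℕ} (hn : 1 ≤ n) (N : ℕ) (f : ℚ⟦X⟧) :
    coeff N (X ^ n * (1 + X ^ n)⁻¹ * f)
      = ∑ s ∈ Icc 1 N, (-1) ^ (s + 1) * coeff N (X ^ (s * n) * f) := by
  calc coeff N (X ^ n * (1 + X ^ n)⁻¹ * f)
        = coeff N (X ^ n * (∑ i ∈ range N, (-X ^ n) ^ i) * f) := by
        refine PowerSeries.coeff_eq_of_X_pow_dvd_sub (m := n + n * N) ?_ (by nlinarith)
        rw [← sub_mul, ← mul_sub, pow_add]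
        exact dvd_mul_of_dvd_left (mul_dvd_mul_left _ (X_pow_dvd_inv_one_add_X_pow_sub hn N)) _
    _ = _ := by
        rw [mul_sum, sum_mul, map_sum, sum_Icc_one_eq_sum_range]
        refine sum_congr rfl fun i _ ↦ ?_
        rw [neg_pow, mul_left_comm, mul_assoc, PowerSeries.coeff_neg_one_pow_mul, ← pow_mul,
          ← pow_add, show n + n * i = (i + 1) * n by ring]
        ring

theorem stmt17_general (L : ℕ) (N : ℕ) :
    ∑ n ∈ Finset.Icc 1 N,
        coeff (R := ℚ) N ((X : PowerSeries ℚ) ^ n * (1 + X ^ n)⁻¹ * gb (L + n - 1) (n - 1))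
      = ∑ s ∈ Finset.Icc 1 N,
        coeff (R := ℚ) N ((-1) ^ (s + 1) * (X : PowerSeries ℚ) ^ s * (qp s (L + 1))⁻¹) := by
  calc _ = ∑ n ∈ Icc 1 N, ∑ s ∈ Icc 1 N,
          (-1) ^ (s + 1) * coeff N (X ^ (s * n) * gb (L + n - 1) (n - 1)) :=
        sum_congr rfl fun n hn ↦ coeff_X_pow_mul_inv_one_add_X_pow_mul (mem_Icc.mp hn).1 N _
    _ = ∑ s ∈ Icc 1 N, (-1) ^ (s + 1) * coeff N (X ^ s * (qp s (L + 1))⁻¹) := by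
        rw [sum_comm]
        refine sum_congr rfl fun s hs ↦ ?_
        rw [← mul_sum, coeff_X_pow_mul_qp_inv (mem_Icc.mp hs).1]
    _ = _ := sum_congr rfl fun s _ ↦ by rw [mul_assoc, PowerSeries.coeff_neg_one_pow_mul]

/-- **Identity (6.1).** For `L ≥ 1`,
`Σ_{n ≥ 1} (q^n/(1+q^n)) C(L+n-1, n-1)_q = Σ_{s ≥ 1} (-1)^{s+1} q^s/(q^s;q)_{L+1}`,
stated coefficient-wise: both summands have order at least their index, so the coefficient
of `q^N` is the finite sum over indices `≤ N`. -/
theorem stmt17 (L : ℕ) (hL : 1 ≤ L) (N : ℕ) :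
    ∑ n ∈ Finset.Icc 1 N,
        coeff (R := ℚ) N ((X : PowerSeries ℚ) ^ n * (1 + X ^ n)⁻¹ * gb (L + n - 1) (n - 1))
      = ∑ s ∈ Finset.Icc 1 N,
        coeff (R := ℚ) N ((-1) ^ (s + 1) * (X : PowerSeries ℚ) ^ s * (qp s (L + 1))⁻¹) :=
  stmt17_general L N
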